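/- (Stochastic Bounded Real Lemma) Let γ > 0. Suppose the constrained backward matrix difference equation P(k) = L(P(k+1),k) − G(P(k+1),k)·H(P(k+1),k)⁻¹·G(P(k+1),k)ᵀ, Q(k) = L̃(P(k+1),Q(k+1),k) − G̃(P(k+1),Q(k+1),k)·H̃(P(k+1),Q(k+1),k)⁻¹·G̃(P(k+1),Q(k+1),k)ᵀ, with terminal conditions P(K+1) = Q(K+1) = 0 and the positivity constraints H(P(k+1),k) > 0 and H̃(P(k+1),Q(k+1),k) > 0 for all k ∈ {0,…,K}, has a (unique) solution (P₁(k), Q₁(k)). Then the perturbed operator satisfies ‖L_K‖ < γ and Q₁(k) ≤ 0 (negative semidefinite) for every k ∈ {0,…,K}. -/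

import Mathlib

open MeasureTheory ProbabilityTheory Matrix Finset

/-- The mean-field stochastic state recursion
`x(k+1) = A x + Ã E x + B ν + B̃ E ν + (C x + C̃ E x + D ν + D̃ E ν)·ω(k)`. -/
noncomputable def mfState {Ω : Type*} [MeasurableSpace Ω] (μ : Measure Ω) {n l : ℕ}
    (A At C Ct : ℕ → Matrix (Fin n) (Fin n) ℝ)
    (B Bt D Dt : ℕ → Matrix (Fin n) (Fin l) ℝ)
    (W : ℕ → Ω → ℝ) (x0 : Fin n → ℝ) (ν : ℕ → Ω → Fin l → ℝ) :
    ℕ → Ω → Fin n → ℝ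
  | 0 => fun _ => x0
  | (k+1) => fun a =>
      A k *ᵥ mfState μ A At C Ct B Bt D Dt W x0 ν k a
      + At k *ᵥ (∫ b, mfState μ A At C Ct B Bt D Dt W x0 ν k b ∂μ)
      + B k *ᵥ ν k a + Bt k *ᵥ (∫ b, ν k b ∂μ)
      + W k a • (C k *ᵥ mfState μ A At C Ct B Bt D Dt W x0 ν k a
          + Ct k *ᵥ (∫ b, mfState μ A At C Ct B Bt D Dt W x0 ν k b ∂μ)
          + D k *ᵥ ν k a + Dt k *ᵥ (∫ b, ν k b ∂μ))

/-- Admissibility of a disturbance: square integrability and independence of the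
noise `ω(k)` from the pair `(x(k), ν(k))`. -/
def mfAdmissible {Ω : Type*} [MeasurableSpace Ω] (μ : Measure Ω) {n l : ℕ} (K : ℕ)
    (W : ℕ → Ω → ℝ) (x : ℕ → Ω → Fin n → ℝ) (ν : ℕ → Ω → Fin l → ℝ) : Prop :=
  (∀ k ≤ K, MemLp (ν k) 2 μ) ∧
  (∀ k ≤ K, IndepFun (fun a => (x k a, ν k a)) (W k) μ)

/-- `L`-type Riccati operator: `AᵀQA + CᵀPC − ΦᵀΦ` (with `Q = P` this is `L(P)`,
with `A = 𝔸`, `C = ℂ` it is `L̃(P,Q)`). -/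
noncomputable def mfL {n m : ℕ} (A C : Matrix (Fin n) (Fin n) ℝ)
    (Φ : Matrix (Fin m) (Fin n) ℝ) (Q P : Matrix (Fin n) (Fin n) ℝ) :
    Matrix (Fin n) (Fin n) ℝ :=
  Aᵀ * Q * A + Cᵀ * P * C - Φᵀ * Φ

/-- `G`-type Riccati operator: `AᵀQB + CᵀPD`. -/
noncomputable def mfG {n l : ℕ} (A C : Matrix (Fin n) (Fin n) ℝ)
    (B D : Matrix (Fin n) (Fin l) ℝ) (Q P : Matrix (Fin n) (Fin n) ℝ) :
    Matrix (Fin n) (Fin l) ℝ :=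
  Aᵀ * Q * B + Cᵀ * P * D

/-- `H`-type operator: `γ²I + BᵀQB + DᵀPD`. -/
noncomputable def mfH {n l : ℕ} (γ : ℝ) (B D : Matrix (Fin n) (Fin l) ℝ)
    (Q P : Matrix (Fin n) (Fin n) ℝ) : Matrix (Fin l) (Fin l) ℝ :=
  γ^2 • (1 : Matrix (Fin l) (Fin l) ℝ) + Bᵀ * Q * B + Dᵀ * P * D

/-!
Let `S k = E[(x k - E x k)ᵀ P k (x k - E x k)] + (E x k)ᵀ Q k (E x k)`. Because `ω k` is centred,
has unit variance and is independent of `(x k, ν k)`, the mean of `x (k+1)` is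
`𝔸 E x + 𝔹 E ν`, and the noise only adds a `ℂ`, `𝔻` term to the fluctuation part. Completing
the square with the Riccati recursion, for the fluctuation (using `H > 0`) and for the mean
(using `H̃ > 0`), gives the dissipation inequality `S k + E‖z k‖² ≤ S (k+1) + γ² E‖ν k‖²`;
summing it with `S (K+1) = 0` and `x 0 = 0` yields `‖L_K‖ ≤ γ`. For the strict inequality, the
positivity constraints are open and the solution of the recursion depends continuously on `γ`,
so the recursion is still solvable at some `γ₀ < γ`, whence `‖L_K‖ ≤ γ₀`. Finally
`-(L - G H⁻¹ Gᵀ)` is a sum of positive semidefinite terms when `-P`, `-Q` are and `H > 0`, so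
`Q₁ ≤ 0` by backward induction.
-/

section

variable {n l m : ℕ}

noncomputable def riccatiMap (γ : ℝ) (A C : Matrix (Fin n) (Fin n) ℝ)
    (B D : Matrix (Fin n) (Fin l) ℝ) (Φ : Matrix (Fin m) (Fin n) ℝ)
    (Q P : Matrix (Fin n) (Fin n) ℝ) : Matrix (Fin n) (Fin n) ℝ :=
  mfL A C Φ Q P - mfG A C B D Q P * (mfH γ B D Q P)⁻¹ * (mfG A C B D Q P)ᵀ

section RiccatiAlgebra

variable {γ : ℝ} {A C Q P : Matrix (Fin n) (Fin n) ℝ} {B D : Matrix (Fin n) (Fin l) ℝ}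
  {Φ : Matrix (Fin m) (Fin n) ℝ}

lemma mfH_transpose (hQ : Qᵀ = Q) (hP : Pᵀ = P) : (mfH γ B D Q P)ᵀ = mfH γ B D Q P := by
  simp [mfH, transpose_mul, hQ, hP, Matrix.mul_assoc]

lemma riccatiMap_transpose (hQ : Qᵀ = Q) (hP : Pᵀ = P) :
    (riccatiMap γ A C B D Φ Q P)ᵀ = riccatiMap γ A C B D Φ Q P := by
  have hinv : ((mfH γ B D Q P)⁻¹)ᵀ = (mfH γ B D Q P)⁻¹ := by
    rw [transpose_nonsing_inv, mfH_transpose hQ hP]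
  simp [riccatiMap, mfL, mfG, transpose_mul, hQ, hP, hinv, Matrix.mul_assoc]

lemma posSemidef_neg_riccatiMap (hQ : (-Q).PosSemidef) (hP : (-P).PosSemidef)
    (hH : (mfH γ B D Q P).PosDef) : (-riccatiMap γ A C B D Φ Q P).PosSemidef := by
  have h : -riccatiMap γ A C B D Φ Q P = (Aᴴ * (-Q) * A + Cᴴ * (-P) * C)
      + (Φᴴ * Φ + mfG A C B D Q P * (mfH γ B D Q P)⁻¹ * (mfG A C B D Q P)ᴴ) := by
    simp only [riccatiMap, mfL, conjTranspose_eq_transpose_of_trivial]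
    noncomm_ring
  rw [h]
  exact ((hQ.conjTranspose_mul_mul_same A).add (hP.conjTranspose_mul_mul_same C)).add
    ((posSemidef_conjTranspose_mul_self Φ).add (hH.inv.posSemidef.mul_mul_conjTranspose_same _))

lemma dotProduct_mulVec_mulVec {p q r : ℕ} (M : Matrix (Fin q) (Fin p) ℝ)
    (N : Matrix (Fin q) (Fin r) ℝ) (u : Fin p → ℝ) (v : Fin r → ℝ) :
    (M *ᵥ u) ⬝ᵥ (N *ᵥ v) = u ⬝ᵥ ((Mᵀ * N) *ᵥ v) := by
  rw [← mulVec_mulVec, dotProduct_transpose_mulVec, dotProduct_comm]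

lemma add_dotProduct_mulVec_add {p : ℕ} {R : Matrix (Fin p) (Fin p) ℝ} (hR : Rᵀ = R)
    (a b : Fin p → ℝ) :
    (a + b) ⬝ᵥ (R *ᵥ (a + b)) = a ⬝ᵥ (R *ᵥ a) + 2 * (a ⬝ᵥ (R *ᵥ b)) + b ⬝ᵥ (R *ᵥ b) := by
  have hba : b ⬝ᵥ (R *ᵥ a) = a ⬝ᵥ (R *ᵥ b) := by
    rw [← dotProduct_transpose_mulVec, hR]
  rw [mulVec_add, add_dotProduct, dotProduct_add, dotProduct_add, hba]
  ring

lemma riccati_completion (hQ : Qᵀ = Q) (hP : Pᵀ = P) (hH : IsUnit (mfH γ B D Q P).det)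
    (y : Fin n → ℝ) (w : Fin l → ℝ) :
    γ ^ 2 * (w ⬝ᵥ w) - (Φ *ᵥ y) ⬝ᵥ (Φ *ᵥ y) - y ⬝ᵥ (riccatiMap γ A C B D Φ Q P *ᵥ y)
      + (A *ᵥ y + B *ᵥ w) ⬝ᵥ (Q *ᵥ (A *ᵥ y + B *ᵥ w))
      + (C *ᵥ y + D *ᵥ w) ⬝ᵥ (P *ᵥ (C *ᵥ y + D *ᵥ w))
    = (w + (mfH γ B D Q P)⁻¹ *ᵥ ((mfG A C B D Q P)ᵀ *ᵥ y)) ⬝ᵥ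
        (mfH γ B D Q P *ᵥ (w + (mfH γ B D Q P)⁻¹ *ᵥ ((mfG A C B D Q P)ᵀ *ᵥ y))) := by
  set H := mfH γ B D Q P with hHdef
  set G := mfG A C B D Q P with hGdef
  have hHt : Hᵀ = H := mfH_transpose hQ hP
  have hHH : H *ᵥ (H⁻¹ *ᵥ (Gᵀ *ᵥ y)) = Gᵀ *ᵥ y := by
    rw [mulVec_mulVec, mul_nonsing_inv H hH, one_mulVec]
  have hcross : w ⬝ᵥ (H *ᵥ (H⁻¹ *ᵥ (Gᵀ *ᵥ y))) = y ⬝ᵥ (G *ᵥ w) := by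
    rw [hHH, dotProduct_transpose_mulVec]
  have hsquare : (H⁻¹ *ᵥ (Gᵀ *ᵥ y)) ⬝ᵥ (H *ᵥ (H⁻¹ *ᵥ (Gᵀ *ᵥ y)))
      = y ⬝ᵥ ((G * H⁻¹ * Gᵀ) *ᵥ y) := by
    rw [hHH, dotProduct_comm, mulVec_mulVec, dotProduct_mulVec_mulVec, transpose_transpose,
      Matrix.mul_assoc]
  rw [add_dotProduct_mulVec_add hQ, add_dotProduct_mulVec_add hP, add_dotProduct_mulVec_add hHt,
    hcross, hsquare]
  simp only [mulVec_mulVec, dotProduct_mulVec_mulVec, riccatiMap, mfL, hGdef, hHdef, mfG, mfH,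
    add_mulVec, sub_mulVec, smul_mulVec, dotProduct_add, dotProduct_sub, dotProduct_smul,
    one_mulVec, Matrix.mul_assoc, smul_eq_mul]
  ring

lemma riccati_dissipation_nonneg (hQ : Qᵀ = Q) (hP : Pᵀ = P) (hH : (mfH γ B D Q P).PosDef)
    (y : Fin n → ℝ) (w : Fin l → ℝ) :
    0 ≤ γ ^ 2 * (w ⬝ᵥ w) - (Φ *ᵥ y) ⬝ᵥ (Φ *ᵥ y) - y ⬝ᵥ (riccatiMap γ A C B D Φ Q P *ᵥ y)
      + (A *ᵥ y + B *ᵥ w) ⬝ᵥ (Q *ᵥ (A *ᵥ y + B *ᵥ w))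
      + (C *ᵥ y + D *ᵥ w) ⬝ᵥ (P *ᵥ (C *ᵥ y + D *ᵥ w)) := by
  rw [riccati_completion hQ hP hH.det_pos.ne'.isUnit]
  simpa only [star_trivial] using hH.posSemidef.dotProduct_mulVec_nonneg _

end RiccatiAlgebra

lemma Matrix.PosDef.eventually_posDef {ι : Type*} [Fintype ι] {M₀ : Matrix ι ι ℝ}
    (h : M₀.PosDef) : ∀ᶠ M in nhds M₀, M.IsHermitian → M.PosDef := by
  have hform : Continuous fun p : Matrix ι ι ℝ × (ι → ℝ) => p.2 ⬝ᵥ (p.1 *ᵥ p.2) := by fun_prop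
  have hsphere : ∀ᶠ M in nhds M₀, ∀ u ∈ Metric.sphere (0 : ι → ℝ) 1, 0 < u ⬝ᵥ (M *ᵥ u) := by
    refine (isCompact_sphere 0 1).eventually_forall_of_forall_eventually fun u hu => ?_
    have hu0 : u ≠ 0 := ne_zero_of_mem_unit_sphere ⟨u, hu⟩
    exact hform.continuousAt.eventually (lt_mem_nhds (by simpa using h.dotProduct_mulVec_pos hu0))
  filter_upwards [hsphere] with M hM hherm
  refine .of_dotProduct_mulVec_pos hherm fun x hx => ?_
  have hnx : 0 < ‖x‖ := norm_pos_iff.2 hx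
  have hx' : x = ‖x‖ • (‖x‖⁻¹ • x) := by rw [smul_smul, mul_inv_cancel₀ hnx.ne', one_smul]
  have hu : ‖x‖⁻¹ • x ∈ Metric.sphere (0 : ι → ℝ) 1 := by
    simp [norm_smul, hnx.ne']
  rw [star_trivial, hx', mulVec_smul, dotProduct_smul, smul_dotProduct, smul_eq_mul, smul_eq_mul]
  exact mul_pos hnx (mul_pos hnx (hM _ hu))

lemma continuousAt_riccatiMap {p q r : ℕ} (A C : Matrix (Fin p) (Fin p) ℝ)
    (B D : Matrix (Fin p) (Fin q) ℝ) (Φ : Matrix (Fin r) (Fin p) ℝ) {γ : ℝ}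
    {f g : ℝ → Matrix (Fin p) (Fin p) ℝ} (hf : ContinuousAt f γ) (hg : ContinuousAt g γ)
    (hH : IsUnit (mfH γ B D (f γ) (g γ)).det) :
    ContinuousAt (fun t => riccatiMap t A C B D Φ (f t) (g t)) γ := by
  have hinv : ContinuousAt Inv.inv (mfH γ B D (f γ) (g γ)) :=
    continuousAt_matrix_inv _ (by
      rw [Ring.inverse_eq_inv']; exact continuousAt_inv₀ hH.ne_zero)
  have hHinv : ContinuousAt (fun t => (mfH t B D (f t) (g t))⁻¹) γ :=
    hinv.comp (f := fun t => mfH t B D (f t) (g t)) (by unfold mfH; fun_prop)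
  unfold riccatiMap mfL mfG
  fun_prop

section CoupledRiccati

variable (K : ℕ) (A At C Ct : ℕ → Matrix (Fin n) (Fin n) ℝ)
  (B Bt D Dt : ℕ → Matrix (Fin n) (Fin l) ℝ) (Φ : ℕ → Matrix (Fin m) (Fin n) ℝ)

structure IsCoupledRiccatiSolution (γ : ℝ) (P Q : ℕ → Matrix (Fin n) (Fin n) ℝ) : Prop where
  P_terminal : P (K + 1) = 0
  Q_terminal : Q (K + 1) = 0
  P_eq : ∀ k ≤ K, P k = riccatiMap γ (A k) (C k) (B k) (D k) (Φ k) (P (k + 1)) (P (k + 1))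
  Q_eq : ∀ k ≤ K, Q k = riccatiMap γ (A k + At k) (C k + Ct k) (B k + Bt k) (D k + Dt k) (Φ k)
    (Q (k + 1)) (P (k + 1))
  posDef_H : ∀ k ≤ K, (mfH γ (B k) (D k) (P (k + 1)) (P (k + 1))).PosDef
  posDef_Ht : ∀ k ≤ K, (mfH γ (B k + Bt k) (D k + Dt k) (Q (k + 1)) (P (k + 1))).PosDef

noncomputable def coupledRiccati (γ : ℝ) (k : ℕ) :
    Matrix (Fin n) (Fin n) ℝ × Matrix (Fin n) (Fin n) ℝ :=
  if K < k then (0, 0) else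
    let PQ := coupledRiccati γ (k + 1)
    (riccatiMap γ (A k) (C k) (B k) (D k) (Φ k) PQ.1 PQ.1,
      riccatiMap γ (A k + At k) (C k + Ct k) (B k + Bt k) (D k + Dt k) (Φ k) PQ.2 PQ.1)
termination_by K + 1 - k

local notation "𝓡" => coupledRiccati K A At C Ct B Bt D Dt Φ

variable {K A At C Ct B Bt D Dt Φ}

lemma coupledRiccati_of_lt {γ : ℝ} {k : ℕ} (hk : K < k) : 𝓡 γ k = (0, 0) := by
  rw [coupledRiccati, if_pos hk]

lemma coupledRiccati_of_le {γ : ℝ} {k : ℕ} (hk : k ≤ K) :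
    𝓡 γ k = (riccatiMap γ (A k) (C k) (B k) (D k) (Φ k) (𝓡 γ (k + 1)).1 (𝓡 γ (k + 1)).1,
      riccatiMap γ (A k + At k) (C k + Ct k) (B k + Bt k) (D k + Dt k) (Φ k)
        (𝓡 γ (k + 1)).2 (𝓡 γ (k + 1)).1) := by
  rw [coupledRiccati, if_neg (not_lt.2 hk)]

lemma coupledRiccati_transpose (γ : ℝ) (k : ℕ) :
    (𝓡 γ k).1ᵀ = (𝓡 γ k).1 ∧ (𝓡 γ k).2ᵀ = (𝓡 γ k).2 := by
  rcases lt_or_ge K k with hk | hk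
  · simp [coupledRiccati_of_lt hk]
  · have ih := coupledRiccati_transpose γ (k + 1)
    rw [coupledRiccati_of_le hk]
    exact ⟨riccatiMap_transpose ih.1 ih.1, riccatiMap_transpose ih.2 ih.1⟩
termination_by K + 1 - k

lemma isCoupledRiccatiSolution_coupledRiccati {γ : ℝ}
    (hH : ∀ k ≤ K, (mfH γ (B k) (D k) (𝓡 γ (k + 1)).1 (𝓡 γ (k + 1)).1).PosDef ∧
      (mfH γ (B k + Bt k) (D k + Dt k) (𝓡 γ (k + 1)).2 (𝓡 γ (k + 1)).1).PosDef) :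
    IsCoupledRiccatiSolution K A At C Ct B Bt D Dt Φ γ (fun k => (𝓡 γ k).1)
      (fun k => (𝓡 γ k).2) where
  P_terminal := by rw [coupledRiccati_of_lt (Nat.lt_succ_self K)]
  Q_terminal := by rw [coupledRiccati_of_lt (Nat.lt_succ_self K)]
  P_eq k hk := by rw [coupledRiccati_of_le hk]
  Q_eq k hk := by rw [coupledRiccati_of_le hk]
  posDef_H k hk := (hH k hk).1
  posDef_Ht k hk := (hH k hk).2

namespace IsCoupledRiccatiSolution

variable {γ : ℝ} {P Q : ℕ → Matrix (Fin n) (Fin n) ℝ}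

lemma eq_coupledRiccati (hsol : IsCoupledRiccatiSolution K A At C Ct B Bt D Dt Φ γ P Q) {k : ℕ}
    (hk : k ≤ K + 1) : 𝓡 γ k = (P k, Q k) := by
  rcases hk.lt_or_eq with hk | rfl
  · have ih := hsol.eq_coupledRiccati (k := k + 1) hk
    rw [coupledRiccati_of_le (Nat.lt_succ_iff.1 hk), ih, hsol.P_eq k (Nat.lt_succ_iff.1 hk),
      hsol.Q_eq k (Nat.lt_succ_iff.1 hk)]
  · rw [coupledRiccati_of_lt (Nat.lt_succ_self K), hsol.P_terminal, hsol.Q_terminal]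
termination_by K + 1 - k

lemma transpose (hsol : IsCoupledRiccatiSolution K A At C Ct B Bt D Dt Φ γ P Q) {k : ℕ}
    (hk : k ≤ K + 1) : (P k)ᵀ = P k ∧ (Q k)ᵀ = Q k := by
  have h : (𝓡 γ k).1ᵀ = (𝓡 γ k).1 ∧ (𝓡 γ k).2ᵀ = (𝓡 γ k).2 := coupledRiccati_transpose γ k
  rwa [hsol.eq_coupledRiccati hk] at h

lemma posSemidef_neg (hsol : IsCoupledRiccatiSolution K A At C Ct B Bt D Dt Φ γ P Q) {k : ℕ}
    (hk : k ≤ K + 1) : (-P k).PosSemidef ∧ (-Q k).PosSemidef := by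
  rcases hk.lt_or_eq with hk | rfl
  · have hk' := Nat.lt_succ_iff.1 hk
    have ih := hsol.posSemidef_neg (k := k + 1) hk
    rw [hsol.P_eq k hk', hsol.Q_eq k hk']
    exact ⟨posSemidef_neg_riccatiMap ih.1 ih.1 (hsol.posDef_H k hk'),
      posSemidef_neg_riccatiMap ih.2 ih.1 (hsol.posDef_Ht k hk')⟩
  · rw [hsol.P_terminal, hsol.Q_terminal, neg_zero]
    exact ⟨.zero, .zero⟩
termination_by K + 1 - k

lemma continuousAt_coupledRiccati (hsol : IsCoupledRiccatiSolution K A At C Ct B Bt D Dt Φ γ P Q)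
    (k : ℕ) : ContinuousAt (fun t => 𝓡 t k) γ := by
  rcases lt_or_ge K k with hk | hk
  · simp only [coupledRiccati_of_lt hk]
    exact continuousAt_const
  · have ih := hsol.continuousAt_coupledRiccati (k + 1)
    have hPQ := hsol.eq_coupledRiccati (Nat.succ_le_succ hk)
    simp only [coupledRiccati_of_le hk]
    refine (continuousAt_riccatiMap _ _ _ _ _ ih.fst ih.fst ?_).prodMk
      (continuousAt_riccatiMap _ _ _ _ _ ih.snd ih.fst ?_)
    · rw [hPQ]; exact (hsol.posDef_H k hk).det_pos.ne'.isUnit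
    · rw [hPQ]; exact (hsol.posDef_Ht k hk).det_pos.ne'.isUnit
termination_by K + 1 - k

lemma eventually_posDef (hsol : IsCoupledRiccatiSolution K A At C Ct B Bt D Dt Φ γ P Q) {k : ℕ}
    (hk : k ≤ K) : ∀ᶠ t in nhds γ,
      (mfH t (B k) (D k) (𝓡 t (k + 1)).1 (𝓡 t (k + 1)).1).PosDef ∧
      (mfH t (B k + Bt k) (D k + Dt k) (𝓡 t (k + 1)).2 (𝓡 t (k + 1)).1).PosDef := by
  have hc := hsol.continuousAt_coupledRiccati (k + 1)
  have hcP := hc.fst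
  have hcQ := hc.snd
  have hH : ContinuousAt (fun t => mfH t (B k) (D k) (𝓡 t (k + 1)).1 (𝓡 t (k + 1)).1) γ := by
    unfold mfH; fun_prop
  have hHt : ContinuousAt
      (fun t => mfH t (B k + Bt k) (D k + Dt k) (𝓡 t (k + 1)).2 (𝓡 t (k + 1)).1) γ := by
    unfold mfH; fun_prop
  have hPQ := hsol.eq_coupledRiccati (k := k + 1) (by omega)
  have hPD : (mfH γ (B k) (D k) (𝓡 γ (k + 1)).1 (𝓡 γ (k + 1)).1).PosDef := by
    rw [hPQ]; exact hsol.posDef_H k hk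
  have hPDt : (mfH γ (B k + Bt k) (D k + Dt k) (𝓡 γ (k + 1)).2 (𝓡 γ (k + 1)).1).PosDef := by
    rw [hPQ]; exact hsol.posDef_Ht k hk
  filter_upwards [hH.eventually hPD.eventually_posDef, hHt.eventually hPDt.eventually_posDef]
    with t h1 h2
  have hsym : (𝓡 t (k + 1)).1ᵀ = (𝓡 t (k + 1)).1 ∧ (𝓡 t (k + 1)).2ᵀ = (𝓡 t (k + 1)).2 :=
    coupledRiccati_transpose t (k + 1)
  exact ⟨h1 ((conjTranspose_eq_transpose_of_trivial _).trans (mfH_transpose hsym.1 hsym.1)),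
    h2 ((conjTranspose_eq_transpose_of_trivial _).trans (mfH_transpose hsym.2 hsym.1))⟩

lemma exists_lt (hsol : IsCoupledRiccatiSolution K A At C Ct B Bt D Dt Φ γ P Q) (hγ : 0 < γ) :
    ∃ γ₀, 0 < γ₀ ∧ γ₀ < γ ∧ IsCoupledRiccatiSolution K A At C Ct B Bt D Dt Φ γ₀
      (fun k => (𝓡 γ₀ k).1) (fun k => (𝓡 γ₀ k).2) := by
  have hev := (Set.finite_Iic K).eventually_all.2 fun k hk => hsol.eventually_posDef hk
  obtain ⟨γ₀, hγ₀, hmem⟩ :=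
    ((hev.filter_mono nhdsWithin_le_nhds).and (Ioo_mem_nhdsLT hγ)).exists
  exact ⟨γ₀, hmem.1, hmem.2, isCoupledRiccatiSolution_coupledRiccati hγ₀⟩

end IsCoupledRiccatiSolution

end CoupledRiccati

section RandomVectors

variable {Ω : Type*} [MeasurableSpace Ω] {μ : Measure Ω} {p q : ℕ}

lemma MeasureTheory.MemLp.mulVec {r : ENNReal} {f : Ω → Fin q → ℝ} (hf : MemLp f r μ)
    (M : Matrix (Fin p) (Fin q) ℝ) : MemLp (fun a => M *ᵥ f a) r μ :=
  (LinearMap.toContinuousLinearMap M.mulVecLin).comp_memLp' hf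

lemma integral_mulVec {f : Ω → Fin q → ℝ} (hf : Integrable f μ) (M : Matrix (Fin p) (Fin q) ℝ) :
    ∫ a, M *ᵥ f a ∂μ = M *ᵥ ∫ a, f a ∂μ :=
  (LinearMap.toContinuousLinearMap M.mulVecLin).integral_comp_comm hf

lemma MeasureTheory.MemLp.integrable_dotProduct {f g : Ω → Fin q → ℝ} (hf : MemLp f 2 μ)
    (hg : MemLp g 2 μ) :
    Integrable (fun a => f a ⬝ᵥ g a) μ :=
  integrable_finsetSum _ fun i _ => (hf.eval i).integrable_mul (hg.eval i)

lemma integral_dotProduct_const {f : Ω → Fin q → ℝ} (hf : Integrable f μ) (v : Fin q → ℝ) :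
    ∫ a, f a ⬝ᵥ v ∂μ = (∫ a, f a ∂μ) ⬝ᵥ v := by
  simp only [dotProduct]
  rw [integral_finsetSum _ fun i _ => (hf.eval i).mul_const (v i)]
  simp only [integral_mul_const, eval_integral hf.eval]

lemma MeasureTheory.MemLp.mul_of_indepFun {ω g : Ω → ℝ} (hω : MemLp ω 2 μ) (hg : MemLp g 2 μ)
    (hind : IndepFun g ω μ) : MemLp (fun a => ω a * g a) 2 μ := by
  refine (memLp_two_iff_integrable_sq (hω.1.mul hg.1)).2 ?_
  have hsq : IndepFun (fun a => g a ^ 2) (fun a => ω a ^ 2) μ :=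
    hind.comp (measurable_id.pow_const 2) (measurable_id.pow_const 2)
  refine (hsq.integrable_mul hg.integrable_sq hω.integrable_sq).congr (.of_forall fun a => ?_)
  simp only [Pi.mul_apply]
  ring

lemma MeasureTheory.MemLp.smul_of_indepFun {ω : Ω → ℝ} {g : Ω → Fin q → ℝ} (hω : MemLp ω 2 μ)
    (hg : MemLp g 2 μ) (hind : IndepFun g ω μ) : MemLp (fun a => ω a • g a) 2 μ :=
  MemLp.of_eval fun i =>
    hω.mul_of_indepFun (hg.eval i) (hind.comp (measurable_pi_apply i) measurable_id)

variable [IsProbabilityMeasure μ]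

lemma integral_quadForm_add_const {f : Ω → Fin q → ℝ} (hf : MemLp f 2 μ)
    (hf0 : ∫ a, f a ∂μ = 0) (R : Matrix (Fin q) (Fin q) ℝ) (c : Fin q → ℝ) :
    ∫ a, (f a + c) ⬝ᵥ (R *ᵥ (f a + c)) ∂μ = (∫ a, f a ⬝ᵥ (R *ᵥ f a) ∂μ) + c ⬝ᵥ (R *ᵥ c) := by
  have hexp : ∀ a, (f a + c) ⬝ᵥ (R *ᵥ (f a + c))
      = f a ⬝ᵥ (R *ᵥ f a) + f a ⬝ᵥ (R *ᵥ c + Rᵀ *ᵥ c) + c ⬝ᵥ (R *ᵥ c) := by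
    intro a
    rw [mulVec_add, add_dotProduct, dotProduct_add, dotProduct_add, dotProduct_add,
      dotProduct_transpose_mulVec]
    ring
  have hquad := hf.integrable_dotProduct (hf.mulVec R)
  have hlin := hf.integrable_dotProduct (memLp_const (R *ᵥ c + Rᵀ *ᵥ c))
  have hsum : Integrable (fun a => f a ⬝ᵥ (R *ᵥ f a) + f a ⬝ᵥ (R *ᵥ c + Rᵀ *ᵥ c)) μ :=
    hquad.add hlin
  simp_rw [hexp]
  rw [integral_add hsum (integrable_const _), integral_add hquad hlin,
    integral_dotProduct_const (hf.integrable one_le_two), hf0, zero_dotProduct, add_zero,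
    integral_const, probReal_univ, one_smul]

lemma integral_quadForm_add_smul_of_indepFun {ζ ξ : Ω → Fin q → ℝ} {ω : Ω → ℝ}
    (hζ : MemLp ζ 2 μ) (hξ : MemLp ξ 2 μ) (hω : MemLp ω 2 μ)
    (hind : IndepFun (fun a => (ζ a, ξ a)) ω μ) (hmean : ∫ a, ω a ∂μ = 0)
    (hvar : ∫ a, ω a * ω a ∂μ = 1) (R : Matrix (Fin q) (Fin q) ℝ) :
    ∫ a, (ζ a + ω a • ξ a) ⬝ᵥ (R *ᵥ (ζ a + ω a • ξ a)) ∂μ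
      = (∫ a, ζ a ⬝ᵥ (R *ᵥ ζ a) ∂μ) + ∫ a, ξ a ⬝ᵥ (R *ᵥ ξ a) ∂μ := by
  set g : Ω → ℝ := fun a => ζ a ⬝ᵥ (R *ᵥ ξ a) + ξ a ⬝ᵥ (R *ᵥ ζ a) with hgdef
  set h : Ω → ℝ := fun a => ξ a ⬝ᵥ (R *ᵥ ξ a) with hhdef
  have hexp : ∀ a, (ζ a + ω a • ξ a) ⬝ᵥ (R *ᵥ (ζ a + ω a • ξ a))
      = ζ a ⬝ᵥ (R *ᵥ ζ a) + ω a * g a + (ω a * ω a) * h a := by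
    intro a
    simp only [hgdef, hhdef, mulVec_add, mulVec_smul, add_dotProduct, dotProduct_add,
      smul_dotProduct, dotProduct_smul, smul_eq_mul]
    ring
  have hg : IndepFun g ω μ :=
    hind.comp (φ := fun p : (Fin q → ℝ) × (Fin q → ℝ) => p.1 ⬝ᵥ (R *ᵥ p.2) + p.2 ⬝ᵥ (R *ᵥ p.1))
      (by fun_prop : Continuous _).measurable measurable_id
  have hh : IndepFun h (fun a => ω a * ω a) μ :=
    hind.comp (φ := fun p : (Fin q → ℝ) × (Fin q → ℝ) => p.2 ⬝ᵥ (R *ᵥ p.2))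
      (by fun_prop : Continuous _).measurable (measurable_id.mul measurable_id)
  have ig : Integrable g μ :=
    (hζ.integrable_dotProduct (hξ.mulVec R)).add (hξ.integrable_dotProduct (hζ.mulVec R))
  have ih : Integrable h μ := hξ.integrable_dotProduct (hξ.mulVec R)
  have iωω : Integrable (fun a => ω a * ω a) μ := hω.integrable_mul hω
  have e1 : ∫ a, ω a * g a ∂μ = 0 := by
    rw [hg.symm.integral_fun_mul_eq_mul_integral hω.1 ig.1, hmean, zero_mul]
  have e2 : ∫ a, (ω a * ω a) * h a ∂μ = ∫ a, h a ∂μ := by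
    rw [hh.symm.integral_fun_mul_eq_mul_integral iωω.1 ih.1, hvar, one_mul]
  have i0 : Integrable (fun a => ζ a ⬝ᵥ (R *ᵥ ζ a)) μ := hζ.integrable_dotProduct (hζ.mulVec R)
  have i1 : Integrable (fun a => ω a * g a) μ :=
    hg.symm.integrable_mul (hω.integrable one_le_two) ig
  have i01 : Integrable (fun a => ζ a ⬝ᵥ (R *ᵥ ζ a) + ω a * g a) μ := i0.add i1
  have i2 : Integrable (fun a => (ω a * ω a) * h a) μ := hh.symm.integrable_mul iωω ih
  simp_rw [hexp]
  rw [integral_add i01 i2, integral_add i0 i1, e1, e2, add_zero]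

end RandomVectors

section MeanFieldStep

variable {Ω : Type*} [MeasurableSpace Ω] {μ : Measure Ω} {q : ℕ}

variable (μ) in
noncomputable def mfStep (A At C Ct : Matrix (Fin n) (Fin n) ℝ)
    (B Bt D Dt : Matrix (Fin n) (Fin l) ℝ) (ω : Ω → ℝ) (X : Ω → Fin n → ℝ)
    (V : Ω → Fin l → ℝ) : Ω → Fin n → ℝ := fun a =>
  A *ᵥ X a + At *ᵥ (∫ b, X b ∂μ) + B *ᵥ V a + Bt *ᵥ (∫ b, V b ∂μ)
    + ω a • (C *ᵥ X a + Ct *ᵥ (∫ b, X b ∂μ) + D *ᵥ V a + Dt *ᵥ (∫ b, V b ∂μ))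

variable (μ) in
noncomputable def mfStorage (P Q : Matrix (Fin n) (Fin n) ℝ) (X : Ω → Fin n → ℝ) : ℝ :=
  (∫ a, (X a - ∫ b, X b ∂μ) ⬝ᵥ (P *ᵥ (X a - ∫ b, X b ∂μ)) ∂μ)
    + (∫ b, X b ∂μ) ⬝ᵥ (Q *ᵥ ∫ b, X b ∂μ)

variable {A At C Ct : Matrix (Fin n) (Fin n) ℝ} {B Bt D Dt : Matrix (Fin n) (Fin l) ℝ}
  {ω : Ω → ℝ} {X : Ω → Fin n → ℝ} {V : Ω → Fin l → ℝ}

lemma mfStep_eq (a : Ω) : mfStep μ A At C Ct B Bt D Dt ω X V a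
    = ((A + At) *ᵥ (∫ b, X b ∂μ) + (B + Bt) *ᵥ (∫ b, V b ∂μ))
      + ((A *ᵥ (X a - ∫ b, X b ∂μ) + B *ᵥ (V a - ∫ b, V b ∂μ))
        + ω a • (C *ᵥ X a + Ct *ᵥ (∫ b, X b ∂μ) + D *ᵥ V a + Dt *ᵥ (∫ b, V b ∂μ))) := by
  simp only [mfStep, add_mulVec, mulVec_sub]
  abel

lemma indepFun_mfStep_noise (hind : IndepFun (fun a => (X a, V a)) ω μ) :
    IndepFun (fun a => (A *ᵥ (X a - ∫ b, X b ∂μ) + B *ᵥ (V a - ∫ b, V b ∂μ),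
      C *ᵥ X a + Ct *ᵥ (∫ b, X b ∂μ) + D *ᵥ V a + Dt *ᵥ (∫ b, V b ∂μ))) ω μ :=
  hind.comp (φ := fun p : (Fin n → ℝ) × (Fin l → ℝ) =>
    (A *ᵥ (p.1 - ∫ b, X b ∂μ) + B *ᵥ (p.2 - ∫ b, V b ∂μ),
      C *ᵥ p.1 + Ct *ᵥ (∫ b, X b ∂μ) + D *ᵥ p.2 + Dt *ᵥ (∫ b, V b ∂μ)))
    (by fun_prop : Continuous _).measurable measurable_id

variable [IsProbabilityMeasure μ]

lemma integral_sub_integral_eq_zero {f : Ω → Fin q → ℝ} (hf : Integrable f μ) :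
    ∫ a, (f a - ∫ b, f b ∂μ) ∂μ = 0 := by
  rw [integral_sub hf (integrable_const _), integral_const, probReal_univ, one_smul, sub_self]

lemma integral_dotProduct_self_eq {Z : Ω → Fin q → ℝ} (hZ : MemLp Z 2 μ) :
    ∫ a, Z a ⬝ᵥ Z a ∂μ = (∫ a, (Z a - ∫ b, Z b ∂μ) ⬝ᵥ (Z a - ∫ b, Z b ∂μ) ∂μ)
      + (∫ b, Z b ∂μ) ⬝ᵥ ∫ b, Z b ∂μ := by
  have h := integral_quadForm_add_const (f := fun a => Z a - ∫ b, Z b ∂μ)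
    (hZ.sub (memLp_const (∫ b, Z b ∂μ)))
    (integral_sub_integral_eq_zero (hZ.integrable one_le_two)) 1 (∫ b, Z b ∂μ)
  simpa only [one_mulVec, sub_add_cancel] using h

lemma integral_mulVec_centered_add {p : ℕ} {X : Ω → Fin n → ℝ} {V : Ω → Fin l → ℝ}
    (hX : MemLp X 2 μ) (hV : MemLp V 2 μ) (A : Matrix (Fin p) (Fin n) ℝ)
    (B : Matrix (Fin p) (Fin l) ℝ) :
    ∫ a, (A *ᵥ (X a - ∫ b, X b ∂μ) + B *ᵥ (V a - ∫ b, V b ∂μ)) ∂μ = 0 := by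
  have hy : MemLp (fun a => X a - ∫ b, X b ∂μ) 2 μ := hX.sub (memLp_const _)
  have hw : MemLp (fun a => V a - ∫ b, V b ∂μ) 2 μ := hV.sub (memLp_const _)
  rw [integral_add ((hy.mulVec A).integrable one_le_two) ((hw.mulVec B).integrable one_le_two),
    integral_mulVec (hy.integrable one_le_two), integral_mulVec (hw.integrable one_le_two),
    integral_sub_integral_eq_zero (hX.integrable one_le_two),
    integral_sub_integral_eq_zero (hV.integrable one_le_two), mulVec_zero, mulVec_zero, add_zero]

lemma memLp_mfStep (hX : MemLp X 2 μ) (hV : MemLp V 2 μ) (hω : MemLp ω 2 μ)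
    (hind : IndepFun (fun a => (X a, V a)) ω μ) :
    MemLp (mfStep μ A At C Ct B Bt D Dt ω X V) 2 μ := by
  have hξ : MemLp (fun a => C *ᵥ X a + Ct *ᵥ (∫ b, X b ∂μ) + D *ᵥ V a + Dt *ᵥ (∫ b, V b ∂μ)) 2 μ :=
    (((hX.mulVec C).add (memLp_const _)).add (hV.mulVec D)).add (memLp_const _)
  exact ((((hX.mulVec A).add (memLp_const _)).add (hV.mulVec B)).add (memLp_const _)).add
    (hω.smul_of_indepFun hξ ((indepFun_mfStep_noise (A := A) (B := B) hind).comp measurable_snd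
      measurable_id))

lemma integral_mfStep (hX : MemLp X 2 μ) (hV : MemLp V 2 μ) (hω : MemLp ω 2 μ)
    (hind : IndepFun (fun a => (X a, V a)) ω μ) (hmean : ∫ a, ω a ∂μ = 0) :
    ∫ a, mfStep μ A At C Ct B Bt D Dt ω X V a ∂μ
      = (A + At) *ᵥ (∫ b, X b ∂μ) + (B + Bt) *ᵥ (∫ b, V b ∂μ) := by
  have hy : MemLp (fun a => X a - ∫ b, X b ∂μ) 2 μ := hX.sub (memLp_const _)
  have hw : MemLp (fun a => V a - ∫ b, V b ∂μ) 2 μ := hV.sub (memLp_const _)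
  have hAy := (hy.mulVec A).integrable one_le_two
  have hBw := (hw.mulVec B).integrable one_le_two
  have hζ := hAy.fun_add hBw
  have hξ : MemLp (fun a => C *ᵥ X a + Ct *ᵥ (∫ b, X b ∂μ) + D *ᵥ V a + Dt *ᵥ (∫ b, V b ∂μ)) 2 μ :=
    (((hX.mulVec C).add (memLp_const _)).add (hV.mulVec D)).add (memLp_const _)
  have hξω : IndepFun
      (fun a => C *ᵥ X a + Ct *ᵥ (∫ b, X b ∂μ) + D *ᵥ V a + Dt *ᵥ (∫ b, V b ∂μ)) ω μ :=
    (indepFun_mfStep_noise (A := A) (B := B) hind).comp measurable_snd measurable_id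
  have hωξ : Integrable (fun a => ω a •
      (C *ᵥ X a + Ct *ᵥ (∫ b, X b ∂μ) + D *ᵥ V a + Dt *ᵥ (∫ b, V b ∂μ))) μ :=
    (hω.smul_of_indepFun hξ hξω).integrable one_le_two
  have hωξ0 : ∫ a, ω a • (C *ᵥ X a + Ct *ᵥ (∫ b, X b ∂μ) + D *ᵥ V a + Dt *ᵥ (∫ b, V b ∂μ)) ∂μ
      = 0 := by
    rw [hξω.symm.integral_fun_smul_eq_smul_integral hω.1 hξ.1, hmean, zero_smul]
  simp_rw [mfStep_eq]
  rw [integral_add (integrable_const _) (hζ.fun_add hωξ), integral_add hζ hωξ,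
    integral_mulVec_centered_add hX hV, hωξ0,
    integral_const, probReal_univ, one_smul, add_zero, add_zero]

lemma mfStorage_mfStep (hX : MemLp X 2 μ) (hV : MemLp V 2 μ) (hω : MemLp ω 2 μ)
    (hind : IndepFun (fun a => (X a, V a)) ω μ) (hmean : ∫ a, ω a ∂μ = 0)
    (hvar : ∫ a, ω a * ω a ∂μ = 1) (P Q : Matrix (Fin n) (Fin n) ℝ) :
    mfStorage μ P Q (mfStep μ A At C Ct B Bt D Dt ω X V)
      = (∫ a, (A *ᵥ (X a - ∫ b, X b ∂μ) + B *ᵥ (V a - ∫ b, V b ∂μ)) ⬝ᵥ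
          (P *ᵥ (A *ᵥ (X a - ∫ b, X b ∂μ) + B *ᵥ (V a - ∫ b, V b ∂μ))) ∂μ)
        + (∫ a, (C *ᵥ (X a - ∫ b, X b ∂μ) + D *ᵥ (V a - ∫ b, V b ∂μ)) ⬝ᵥ
          (P *ᵥ (C *ᵥ (X a - ∫ b, X b ∂μ) + D *ᵥ (V a - ∫ b, V b ∂μ))) ∂μ)
        + ((C + Ct) *ᵥ (∫ b, X b ∂μ) + (D + Dt) *ᵥ (∫ b, V b ∂μ)) ⬝ᵥ
          (P *ᵥ ((C + Ct) *ᵥ (∫ b, X b ∂μ) + (D + Dt) *ᵥ (∫ b, V b ∂μ)))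
        + ((A + At) *ᵥ (∫ b, X b ∂μ) + (B + Bt) *ᵥ (∫ b, V b ∂μ)) ⬝ᵥ
          (Q *ᵥ ((A + At) *ᵥ (∫ b, X b ∂μ) + (B + Bt) *ᵥ (∫ b, V b ∂μ))) := by
  have hy : MemLp (fun a => X a - ∫ b, X b ∂μ) 2 μ := hX.sub (memLp_const _)
  have hw : MemLp (fun a => V a - ∫ b, V b ∂μ) 2 μ := hV.sub (memLp_const _)
  have hξ_eq : ∀ a, C *ᵥ X a + Ct *ᵥ (∫ b, X b ∂μ) + D *ᵥ V a + Dt *ᵥ (∫ b, V b ∂μ)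
      = (C *ᵥ (X a - ∫ b, X b ∂μ) + D *ᵥ (V a - ∫ b, V b ∂μ))
        + ((C + Ct) *ᵥ (∫ b, X b ∂μ) + (D + Dt) *ᵥ (∫ b, V b ∂μ)) := by
    intro a
    simp only [add_mulVec, mulVec_sub]
    abel
  have hζ : MemLp (fun a => A *ᵥ (X a - ∫ b, X b ∂μ) + B *ᵥ (V a - ∫ b, V b ∂μ)) 2 μ :=
    (hy.mulVec A).add (hw.mulVec B)
  have hθ : MemLp (fun a => C *ᵥ (X a - ∫ b, X b ∂μ) + D *ᵥ (V a - ∫ b, V b ∂μ)) 2 μ :=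
    (hy.mulVec C).add (hw.mulVec D)
  have hξ : MemLp (fun a => (C *ᵥ (X a - ∫ b, X b ∂μ) + D *ᵥ (V a - ∫ b, V b ∂μ))
      + ((C + Ct) *ᵥ (∫ b, X b ∂μ) + (D + Dt) *ᵥ (∫ b, V b ∂μ))) 2 μ :=
    hθ.add (memLp_const _)
  have hind' := indepFun_mfStep_noise (A := A) (B := B) (C := C) (Ct := Ct) (D := D) (Dt := Dt)
    hind
  simp only [hξ_eq] at hind'
  unfold mfStorage
  rw [integral_mfStep hX hV hω hind hmean]
  simp_rw [mfStep_eq, add_sub_cancel_left, hξ_eq]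
  rw [integral_quadForm_add_smul_of_indepFun hζ hξ hω hind' hmean hvar,
    integral_quadForm_add_const hθ (integral_mulVec_centered_add hX hV C D)]
  ring

end MeanFieldStep

section Dissipation

variable {Ω : Type*} [MeasurableSpace Ω] {μ : Measure Ω}
  {A At C Ct : Matrix (Fin n) (Fin n) ℝ} {B Bt D Dt : Matrix (Fin n) (Fin l) ℝ}

lemma integral_riccati_dissipation_le {γ : ℝ} {Φ : Matrix (Fin m) (Fin n) ℝ}
    {P Q : Matrix (Fin n) (Fin n) ℝ} (hQ : Qᵀ = Q) (hP : Pᵀ = P) (hH : (mfH γ B D Q P).PosDef)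
    {y : Ω → Fin n → ℝ} {w : Ω → Fin l → ℝ} (hy : MemLp y 2 μ) (hw : MemLp w 2 μ) :
    (∫ a, (Φ *ᵥ y a) ⬝ᵥ (Φ *ᵥ y a) ∂μ) + ∫ a, y a ⬝ᵥ (riccatiMap γ A C B D Φ Q P *ᵥ y a) ∂μ
      ≤ γ ^ 2 * (∫ a, w a ⬝ᵥ w a ∂μ)
        + (∫ a, (A *ᵥ y a + B *ᵥ w a) ⬝ᵥ (Q *ᵥ (A *ᵥ y a + B *ᵥ w a)) ∂μ)
        + ∫ a, (C *ᵥ y a + D *ᵥ w a) ⬝ᵥ (P *ᵥ (C *ᵥ y a + D *ᵥ w a)) ∂μ := by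
  have hζ : MemLp (fun a => A *ᵥ y a + B *ᵥ w a) 2 μ := (hy.mulVec A).add (hw.mulVec B)
  have hθ : MemLp (fun a => C *ᵥ y a + D *ᵥ w a) 2 μ := (hy.mulVec C).add (hw.mulVec D)
  have iΦ := (hy.mulVec Φ).integrable_dotProduct (hy.mulVec Φ)
  have iR := hy.integrable_dotProduct (hy.mulVec (riccatiMap γ A C B D Φ Q P))
  have iw := (hw.integrable_dotProduct hw).const_mul (γ ^ 2)
  have iζ := hζ.integrable_dotProduct (hζ.mulVec Q)
  have iθ := hθ.integrable_dotProduct (hθ.mulVec P)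
  have h := integral_mono (iΦ.fun_add iR) ((iw.fun_add iζ).fun_add iθ) fun a => by
    have := riccati_dissipation_nonneg (A := A) (C := C) (Φ := Φ) hQ hP hH (y a) (w a)
    simp only
    linarith
  rwa [integral_add iΦ iR, integral_add (iw.fun_add iζ) iθ, integral_add iw iζ,
    integral_const_mul] at h

variable [IsProbabilityMeasure μ] {ω : Ω → ℝ} {X : Ω → Fin n → ℝ} {V : Ω → Fin l → ℝ}

lemma mfStorage_riccatiMap_add_le {γ : ℝ} {Φ : Matrix (Fin m) (Fin n) ℝ}
    {P Q : Matrix (Fin n) (Fin n) ℝ} (hP : Pᵀ = P) (hQ : Qᵀ = Q) (hH : (mfH γ B D P P).PosDef)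
    (hHt : (mfH γ (B + Bt) (D + Dt) Q P).PosDef)
    (hX : MemLp X 2 μ) (hV : MemLp V 2 μ) (hω : MemLp ω 2 μ)
    (hind : IndepFun (fun a => (X a, V a)) ω μ) (hmean : ∫ a, ω a ∂μ = 0)
    (hvar : ∫ a, ω a * ω a ∂μ = 1) :
    mfStorage μ (riccatiMap γ A C B D Φ P P)
        (riccatiMap γ (A + At) (C + Ct) (B + Bt) (D + Dt) Φ Q P) X
      + ∫ a, (Φ *ᵥ X a) ⬝ᵥ (Φ *ᵥ X a) ∂μ
      ≤ mfStorage μ P Q (mfStep μ A At C Ct B Bt D Dt ω X V) + γ ^ 2 * ∫ a, V a ⬝ᵥ V a ∂μ := by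
  have hΦΦ : ∫ a, (Φ *ᵥ X a) ⬝ᵥ (Φ *ᵥ X a) ∂μ
      = (∫ a, (Φ *ᵥ (X a - ∫ b, X b ∂μ)) ⬝ᵥ (Φ *ᵥ (X a - ∫ b, X b ∂μ)) ∂μ)
        + (Φ *ᵥ ∫ b, X b ∂μ) ⬝ᵥ (Φ *ᵥ ∫ b, X b ∂μ) := by
    rw [integral_dotProduct_self_eq (hX.mulVec Φ), integral_mulVec (hX.integrable one_le_two)]
    simp_rw [mulVec_sub]
  have hfluct := integral_riccati_dissipation_le (A := A) (C := C) (Φ := Φ) hP hP hH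
    (hX.sub (memLp_const (∫ b, X b ∂μ))) (hV.sub (memLp_const (∫ b, V b ∂μ)))
  have hmeanPart := riccati_dissipation_nonneg (A := A + At) (C := C + Ct) (Φ := Φ) hQ hP hHt
    (∫ b, X b ∂μ) (∫ b, V b ∂μ)
  rw [mfStorage_mfStep hX hV hω hind hmean hvar, hΦΦ, integral_dotProduct_self_eq hV]
  unfold mfStorage
  simp only [Pi.sub_apply] at hfluct
  linarith

end Dissipation

section Telescoping

variable {Ω : Type*} [MeasurableSpace Ω] {μ : Measure Ω} {K : ℕ}
  {A At C Ct : ℕ → Matrix (Fin n) (Fin n) ℝ} {B Bt D Dt : ℕ → Matrix (Fin n) (Fin l) ℝ}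
  {Φ : ℕ → Matrix (Fin m) (Fin n) ℝ} {W : ℕ → Ω → ℝ} {x0 : Fin n → ℝ} {ν : ℕ → Ω → Fin l → ℝ}

lemma mfState_succ (k : ℕ) : mfState μ A At C Ct B Bt D Dt W x0 ν (k + 1)
    = mfStep μ (A k) (At k) (C k) (Ct k) (B k) (Bt k) (D k) (Dt k) (W k)
      (mfState μ A At C Ct B Bt D Dt W x0 ν k) (ν k) := rfl

variable [IsProbabilityMeasure μ]

lemma memLp_mfState (hW2 : ∀ k ≤ K, MemLp (W k) 2 μ)
    (hadm : mfAdmissible μ K W (mfState μ A At C Ct B Bt D Dt W x0 ν) ν) :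
    ∀ k ≤ K + 1, MemLp (mfState μ A At C Ct B Bt D Dt W x0 ν k) 2 μ
  | 0, _ => memLp_const x0
  | k + 1, hk => by
    have hk' : k ≤ K := Nat.succ_le_succ_iff.1 hk
    rw [mfState_succ]
    exact memLp_mfStep (memLp_mfState hW2 hadm k (Nat.le_succ_of_le hk')) (hadm.1 k hk')
      (hW2 k hk') (hadm.2 k hk')

lemma IsCoupledRiccatiSolution.sum_output_le {γ : ℝ} {P Q : ℕ → Matrix (Fin n) (Fin n) ℝ}
    (hsol : IsCoupledRiccatiSolution K A At C Ct B Bt D Dt Φ γ P Q)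
    (hW2 : ∀ k ≤ K, MemLp (W k) 2 μ) (hWmean : ∀ k ≤ K, ∫ a, W k a ∂μ = 0)
    (hWvar : ∀ k ≤ K, ∫ a, W k a * W k a ∂μ = 1)
    (hadm : mfAdmissible μ K W (mfState μ A At C Ct B Bt D Dt W x0 ν) ν) :
    ∑ k ∈ range (K + 1), ∫ a, (Φ k *ᵥ mfState μ A At C Ct B Bt D Dt W x0 ν k a) ⬝ᵥ
        (Φ k *ᵥ mfState μ A At C Ct B Bt D Dt W x0 ν k a) ∂μ
      ≤ γ ^ 2 * ∑ k ∈ range (K + 1), ∫ a, ν k a ⬝ᵥ ν k a ∂μ - x0 ⬝ᵥ (Q 0 *ᵥ x0) := by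
  set x := mfState μ A At C Ct B Bt D Dt W x0 ν
  set S : ℕ → ℝ := fun k => mfStorage μ (P k) (Q k) (x k) with hS
  have hstep : ∀ k ∈ range (K + 1), S k + ∫ a, (Φ k *ᵥ x k a) ⬝ᵥ (Φ k *ᵥ x k a) ∂μ
      ≤ S (k + 1) + γ ^ 2 * ∫ a, ν k a ⬝ᵥ ν k a ∂μ := by
    intro k hk
    have hk' : k ≤ K := Nat.lt_succ_iff.1 (mem_range.1 hk)
    have hsym := hsol.transpose (k := k + 1) (Nat.succ_le_succ hk')
    simp only [hS, hsol.P_eq k hk', hsol.Q_eq k hk']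
    exact mfStorage_riccatiMap_add_le hsym.1 hsym.2 (hsol.posDef_H k hk') (hsol.posDef_Ht k hk')
      (memLp_mfState hW2 hadm k (Nat.le_succ_of_le hk')) (hadm.1 k hk') (hW2 k hk')
      (hadm.2 k hk') (hWmean k hk') (hWvar k hk')
  have hS0 : S 0 = x0 ⬝ᵥ (Q 0 *ᵥ x0) := by
    simp [hS, x, mfStorage, mfState]
  have hSK : S (K + 1) = 0 := by
    simp [hS, mfStorage, hsol.P_terminal, hsol.Q_terminal]
  have htel := Finset.sum_range_sub S (K + 1)
  rw [sum_sub_distrib] at htel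
  have hsum := Finset.sum_le_sum hstep
  rw [sum_add_distrib, sum_add_distrib, ← mul_sum] at hsum
  linarith

end Telescoping

lemma Real.sqrt_div_sqrt_le {a b c : ℝ} (hb : 0 < b) (hc : 0 ≤ c) (h : a ≤ c ^ 2 * b) :
    √a / √b ≤ c := by
  rw [div_le_iff₀ (Real.sqrt_pos.2 hb), ← Real.sqrt_sq hc, ← Real.sqrt_mul (sq_nonneg c)]
  exact Real.sqrt_le_sqrt h

end

/-- Theorem 2.4, SBRL.  If the constrained backward difference
equation (2.6) has a solution `(P₁, Q₁)`, then the perturbed operator of the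
mean-field system satisfies `‖L_K‖ < γ`, and `Q₁(k) ≤ 0` for all `k ∈ {0,…,K}`. -/
theorem mf_SBRL {Ω : Type*} [MeasurableSpace Ω] (μ : Measure Ω) [IsProbabilityMeasure μ]
    (K n l m : ℕ) (γ : ℝ) (hγ : 0 < γ)
    (A At C Ct : ℕ → Matrix (Fin n) (Fin n) ℝ)
    (B Bt D Dt : ℕ → Matrix (Fin n) (Fin l) ℝ)
    (Φ : ℕ → Matrix (Fin m) (Fin n) ℝ)
    (W : ℕ → Ω → ℝ)
    (hW2 : ∀ k ≤ K, MemLp (W k) 2 μ)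
    (hWmean : ∀ k ≤ K, ∫ a, W k a ∂μ = 0)
    (hWcov : ∀ s ≤ K, ∀ t ≤ K, ∫ a, W s a * W t a ∂μ = if s = t then (1:ℝ) else 0)
    (P1 Q1 : ℕ → Matrix (Fin n) (Fin n) ℝ)
    (hP1eq : ∀ k ≤ K,
      P1 k = mfL (A k) (C k) (Φ k) (P1 (k+1)) (P1 (k+1))
        - mfG (A k) (C k) (B k) (D k) (P1 (k+1)) (P1 (k+1))
          * (mfH γ (B k) (D k) (P1 (k+1)) (P1 (k+1)))⁻¹
          * (mfG (A k) (C k) (B k) (D k) (P1 (k+1)) (P1 (k+1)))ᵀ)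
    (hQ1eq : ∀ k ≤ K,
      Q1 k = mfL (A k + At k) (C k + Ct k) (Φ k) (Q1 (k+1)) (P1 (k+1))
        - mfG (A k + At k) (C k + Ct k) (B k + Bt k) (D k + Dt k) (Q1 (k+1)) (P1 (k+1))
          * (mfH γ (B k + Bt k) (D k + Dt k) (Q1 (k+1)) (P1 (k+1)))⁻¹
          * (mfG (A k + At k) (C k + Ct k) (B k + Bt k) (D k + Dt k)
              (Q1 (k+1)) (P1 (k+1)))ᵀ)
    (hterm : P1 (K+1) = 0 ∧ Q1 (K+1) = 0)
    (hposH : ∀ k ≤ K, (mfH γ (B k) (D k) (P1 (k+1)) (P1 (k+1))).PosDef)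
    (hposHt : ∀ k ≤ K,
      (mfH γ (B k + Bt k) (D k + Dt k) (Q1 (k+1)) (P1 (k+1))).PosDef) :
    sSup {r : ℝ | ∃ ν : ℕ → Ω → Fin l → ℝ,
        mfAdmissible μ K W (mfState μ A At C Ct B Bt D Dt W 0 ν) ν ∧
        0 < (∑ k ∈ Finset.range (K + 1), ∫ a, (ν k a) ⬝ᵥ (ν k a) ∂μ) ∧
        r = Real.sqrt (∑ k ∈ Finset.range (K + 1), ∫ a,
              (Φ k *ᵥ mfState μ A At C Ct B Bt D Dt W 0 ν k a) ⬝ᵥ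
                (Φ k *ᵥ mfState μ A At C Ct B Bt D Dt W 0 ν k a) ∂μ)
            / Real.sqrt (∑ k ∈ Finset.range (K + 1), ∫ a, (ν k a) ⬝ᵥ (ν k a) ∂μ)} < γ
    ∧ ∀ k ≤ K, (-(Q1 k)).PosSemidef := by
  have hWvar : ∀ k ≤ K, ∫ a, W k a * W k a ∂μ = 1 := fun k hk => by
    simpa using hWcov k hk k hk
  have hsol : IsCoupledRiccatiSolution K A At C Ct B Bt D Dt Φ γ P1 Q1 :=
    ⟨hterm.1, hterm.2, hP1eq, hQ1eq, hposH, hposHt⟩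
  obtain ⟨γ₀, hγ₀, hγ₀γ, hsol₀⟩ := hsol.exists_lt hγ
  refine ⟨(Real.sSup_le ?_ hγ₀.le).trans_lt hγ₀γ, fun k hk => (hsol.posSemidef_neg (by omega)).2⟩
  rintro r ⟨ν, hadm, hpos, rfl⟩
  refine Real.sqrt_div_sqrt_le hpos hγ₀.le ?_
  simpa using hsol₀.sum_output_le hW2 hWmean hWvar hadm
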